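/- Let Π = (δ, Σ, 𝒞) be an LCL problem for δ-regular rooted trees. In every good sequence (Σ^R_1, Σ^C_1, Σ^R_2, Σ^C_2, …, Σ^R_k) one has Σ ⊇ Σ^R_1 ⊇ Σ^C_1 ⊇ Σ^R_2 ⊇ Σ^C_2 ⊇ ⋯ ⊇ Σ^R_k. Moreover, if Π admits a good sequence of some length k ≥ |Σ| + 1, then Π admits a good sequence of length k′ for every positive integer k′. -/

import Mathlib

/-!
Each `Σ^C_i` is an SCC inside `Σ^R_i` and each `Σ^R_{i+1}` is a trim of `Σ^C_i`, so a good
sequence is a decreasing chain of nonempty sets of labels. A chain of more than `|Σ|`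
nonempty sets cannot decrease strictly at every step, so some `Σ^R_{i+1} = Σ^R_i`. Then
`Σ^C_i` is a flexible SCC of `Σ^R_{i+1}` whose trim is `Σ^R_{i+1}` again, so repeating the
pair `(Σ^R_i, Σ^C_i)` forever (or cutting the sequence short) gives good sequences of
every length.
-/

/-- `hasWalk E k u v`: there is a walk of length exactly `k` from `u` to `v` in the
directed graph with edge relation `E`. -/
def hasWalk {α : Type*} (E : α → α → Prop) : ℕ → α → α → Prop
  | 0, u, v => u = v
  | k + 1, u, v => ∃ w, E u w ∧ hasWalk E k w v


/-- `rOk 𝒞 S i σ`: there is a correct labeling of the complete rooted tree `T_i`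
whose root has label `σ` and all of whose labels lie in `S` (every node with
children must use a node configuration from `𝒞`). -/
def rOk {L : Type} (C : Set (L × Multiset L)) (S : Set L) : ℕ → L → Prop
  | 0, σ => σ ∈ S
  | i + 1, σ => σ ∈ S ∧ ∃ m : Multiset L, (σ, m) ∈ C ∧ ∀ a ∈ m, rOk C S i a

/-- `trim(Σ̃)` for rooted trees: labels `σ ∈ S` such that for every `i ≥ 1` there is
a correct labeling of `T_i` with root label `σ` and all labels in `S`. -/
def trimR {L : Type} (C : Set (L × Multiset L)) (S : Set L) : Set L :=
  {σ | σ ∈ S ∧ ∀ i : ℕ, 1 ≤ i → rOk C S i σ}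

/-- Edge `a → σ` of the path-form digraph of `Π` restricted to `S`. -/
def pathEdge {L : Type} (C : Set (L × Multiset L)) (S : Set L) (a σ : L) : Prop :=
  a ∈ S ∧ σ ∈ S ∧ ∃ m : Multiset L, (σ, m) ∈ C ∧ (∀ b ∈ m, b ∈ S) ∧ a ∈ m

/-- `σ` is path-flexible w.r.t. the path-form digraph of `Π` restricted to `S`. -/
def pathFlex {L : Type} (C : Set (L × Multiset L)) (S : Set L) (σ : L) : Prop :=
  ∃ K : ℕ, ∀ k : ℕ, K ≤ k → hasWalk (pathEdge C S) k σ σ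

/-- Reachability (by a walk of length `≥ 0`) in a directed graph. -/
def reaches {α : Type*} (E : α → α → Prop) (u v : α) : Prop :=
  ∃ k : ℕ, hasWalk E k u v

/-- `U` is a strongly connected component of the digraph with vertex set `Vs` and
edge relation `E`: any two vertices of `U` are connected by walks in both
directions, and `U` is maximal with this property. -/
def isSCC {α : Type*} (E : α → α → Prop) (Vs : Set α) (U : Set α) : Prop :=
  U ⊆ Vs ∧ (∀ u ∈ U, ∀ v ∈ U, reaches E u v) ∧
    ∀ W : Set α, U ⊆ W → W ⊆ Vs → (∀ u ∈ W, ∀ v ∈ W, reaches E u v) → W = U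

/-- `flexible-SCC(Σ̃)` for the rooted setting: path-flexible strongly connected
components of the path-form digraph of `Π` restricted to `Σ̃`. -/
def flexSCCR {L : Type} (C : Set (L × Multiset L)) (St : Set L) : Set (Set L) :=
  {U | isSCC (pathEdge C St) St U ∧ ∀ σ ∈ U, pathFlex C St σ}

/-- A good sequence `(Σ^R_1, Σ^C_1, Σ^R_2, Σ^C_2, …, Σ^R_k)` for an LCL problem
`Π = (δ, Σ, 𝒞)` on `δ`-regular rooted trees. -/
def goodSeqR {L : Type} (C : Set (L × Multiset L)) (k : ℕ)
    (R Cs : ℕ → Set L) : Prop :=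
  R 1 = trimR C (Set.univ : Set L) ∧
  (∀ i : ℕ, 1 ≤ i → i ≤ k - 1 → Cs i ∈ flexSCCR C (R i)) ∧
  (∀ i : ℕ, 2 ≤ i → i ≤ k → R i = trimR C (Cs (i - 1))) ∧
  (R k).Nonempty

theorem trimR_subset {L : Type} (C : Set (L × Multiset L)) (S : Set L) : trimR C S ⊆ S :=
  fun _ hσ => hσ.1

theorem exists_succ_eq_of_card_lt {L : Type} [Fintype L] {k : ℕ} {R : ℕ → Set L}
    (hR : ∀ i, 1 ≤ i → i + 1 ≤ k → R (i + 1) ⊆ R i) (hne : (R k).Nonempty)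
    (hk : Fintype.card L + 1 ≤ k) :
    ∃ i, 1 ≤ i ∧ i + 1 ≤ k ∧ R (i + 1) = R i := by
  by_contra! hstrict
  have hdecr : ∀ j, 1 ≤ j → j ≤ k → (R j).ncard + j ≤ (R 1).ncard + 1 := by
    intro j hj hjk
    induction j, hj using Nat.le_induction with
    | base => rfl
    | succ j hj ih =>
      have hlt : (R (j + 1)).ncard < (R j).ncard :=
        Set.ncard_lt_ncard ((hR j hj hjk).ssubset_of_ne (hstrict j hj hjk)) (Set.toFinite _)
      have := ih (by omega)
      omega
  have hlast := hdecr k (by omega) le_rfl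
  have hpos : 0 < (R k).ncard := hne.ncard_pos (Set.toFinite _)
  have hfirst : (R 1).ncard ≤ Fintype.card L := by
    simpa [Nat.card_eq_fintype_card] using Set.ncard_le_card (R 1)
  omega

namespace goodSeqR

variable {L : Type} {C : Set (L × Multiset L)} {k : ℕ} {R Cs : ℕ → Set L}

theorem cs_subset (hg : goodSeqR C k R Cs) {i : ℕ} (hi : 1 ≤ i) (hik : i ≤ k - 1) :
    Cs i ⊆ R i :=
  (hg.2.1 i hi hik).1.1

theorem subset_cs (hg : goodSeqR C k R Cs) {i : ℕ} (hi : 2 ≤ i) (hik : i ≤ k) :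
    R i ⊆ Cs (i - 1) :=
  hg.2.2.1 i hi hik ▸ trimR_subset C _

theorem succ_subset (hg : goodSeqR C k R Cs) {i : ℕ} (hi : 1 ≤ i) (hik : i + 1 ≤ k) :
    R (i + 1) ⊆ R i :=
  (hg.subset_cs (i := i + 1) (by omega) hik).trans (hg.cs_subset hi (by omega))

theorem subset_of_le (hg : goodSeqR C k R Cs) {a b : ℕ} (ha : 1 ≤ a) (hab : a ≤ b)
    (hbk : b ≤ k) : R b ⊆ R a := by
  induction b, hab using Nat.le_induction with
  | base => exact subset_rfl
  | succ b hb ih => exact (hg.succ_subset (by omega) hbk).trans (ih (by omega))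

theorem nonempty (hg : goodSeqR C k R Cs) {a : ℕ} (ha : 1 ≤ a) (hak : a ≤ k) :
    (R a).Nonempty :=
  hg.2.2.2.mono (hg.subset_of_le ha hak le_rfl)

/-- A stationary step `Σ^R_{i+1} = Σ^R_i` lets the prefix up to `i` be repeated forever. -/
theorem min_of_succ_eq (hg : goodSeqR C k R Cs) {i : ℕ} (hi : 1 ≤ i) (hik : i + 1 ≤ k)
    (hstat : R (i + 1) = R i) {k' : ℕ} (hk' : 1 ≤ k') :
    goodSeqR C k' (fun j => R (min j i)) (fun j => Cs (min j i)) := by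
  refine ⟨?_, fun j hj _ => hg.2.1 (min j i) (by omega) (by omega), fun j hj _ => ?_,
    hg.nonempty (by omega) (by omega)⟩
  · simpa [Nat.min_eq_left hi] using hg.1
  · show R (min j i) = trimR C (Cs (min (j - 1) i))
    rcases le_or_gt j i with hji | hij
    · rw [min_eq_left hji, min_eq_left (by omega)]
      exact hg.2.2.1 j hj (by omega)
    · rw [min_eq_right hij.le, min_eq_right (by omega), ← hstat]
      exact hg.2.2.1 (i + 1) (by omega) hik

end goodSeqR

theorem stmt18_general {L : Type} [Fintype L]
    (C : Set (L × Multiset L)) :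
    (∀ (k : ℕ) (R Cs : ℕ → Set L), 1 ≤ k → goodSeqR C k R Cs →
      R 1 ⊆ (Set.univ : Set L) ∧
      (∀ i : ℕ, 1 ≤ i → i ≤ k - 1 → Cs i ⊆ R i) ∧
      (∀ i : ℕ, 2 ≤ i → i ≤ k → R i ⊆ Cs (i - 1))) ∧
    ((∃ (k : ℕ) (R Cs : ℕ → Set L), Fintype.card L + 1 ≤ k ∧ goodSeqR C k R Cs) →
      ∀ k' : ℕ, 1 ≤ k' → ∃ R Cs : ℕ → Set L, goodSeqR C k' R Cs) := by
  refine ⟨fun k R Cs _ hg => ⟨Set.subset_univ _, fun _ => hg.cs_subset, fun _ => hg.subset_cs⟩, ?_⟩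
  rintro ⟨k, R, Cs, hk, hg⟩ k' hk'
  obtain ⟨i, hi, hik, hstat⟩ :=
    exists_succ_eq_of_card_lt (fun _ => hg.succ_subset) (hg.nonempty (by omega) le_rfl) hk
  exact ⟨_, _, hg.min_of_succ_eq hi hik hstat hk'⟩

/-- Good sequences for rooted trees are decreasing, and an
extremely long good sequence yields good sequences of every length. -/
theorem stmt18 {L : Type} [Fintype L] [DecidableEq L]
    (δ : ℕ) (hδ : 1 ≤ δ) (C : Set (L × Multiset L))
    (hC : ∀ c ∈ C, Multiset.card c.2 = δ) :
    (∀ (k : ℕ) (R Cs : ℕ → Set L), 1 ≤ k → goodSeqR C k R Cs →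
      R 1 ⊆ (Set.univ : Set L) ∧
      (∀ i : ℕ, 1 ≤ i → i ≤ k - 1 → Cs i ⊆ R i) ∧
      (∀ i : ℕ, 2 ≤ i → i ≤ k → R i ⊆ Cs (i - 1))) ∧
    ((∃ (k : ℕ) (R Cs : ℕ → Set L), Fintype.card L + 1 ≤ k ∧ goodSeqR C k R Cs) →
      ∀ k' : ℕ, 1 ≤ k' → ∃ R Cs : ℕ → Set L, goodSeqR C k' R Cs) :=
  stmt18_general C
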